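/- For a fixed n, Day extension defines a functor from the functor category [C^n ⥤ C] to the opposite of the functor category [[C ⥤ Type]^n ⥤ [C ⥤ Type]]: a natural transformation α : θ ⟶ χ between n-ary operations induces a natural transformation α_D : χ_D ⟶ θ_D, contravariantly and functorially. -/

import Mathlib

open CategoryTheory Opposite

universe u v

namespace DayPaper

variable {B C : Type} [SmallCategory B] [SmallCategory C]

/-- A point of the coend defining the Day extension (left Kan extension) of a
copresheaf `P` along `θ`, at `c`. -/
structure DayPt (θ : B ⥤ C) (P : B ⥤ Type) (c : C) : Type where
  pt : B
  elt : P.obj pt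
  arr : θ.obj pt ⟶ c

/-- The relation generating the coend quotient. -/
def DayRel (θ : B ⥤ C) (P : B ⥤ Type) (c : C) : DayPt θ P c → DayPt θ P c → Prop :=
  fun x y => ∃ f : x.pt ⟶ y.pt, P.map f x.elt = y.elt ∧ x.arr = θ.map f ≫ y.arr

/-- The coend `∫^{b} P(b) × Hom(θ b, c)`. -/
def DayObj (θ : B ⥤ C) (P : B ⥤ Type) (c : C) : Type := Quot (DayRel θ P c)

/-- The Day extension of a copresheaf `P` along `θ`, as a copresheaf on `C`. -/
def DayCopresheaf (θ : B ⥤ C) (P : B ⥤ Type) : C ⥤ Type where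
  obj c := DayObj θ P c
  map {c c'} g := TypeCat.ofHom (Quot.map (fun x => (⟨x.pt, x.elt, x.arr ≫ g⟩ : DayPt θ P c'))
    (by rintro x y ⟨f, h1, h2⟩; exact ⟨f, h1, by dsimp; rw [h2, Category.assoc]⟩))
  map_id c := by
    ext q
    induction q using Quot.ind with
    | _ x => exact congrArg (Quot.mk _) (by rcases x with ⟨b, p, a⟩; simp)
  map_comp {c c' c''} g g' := by
    ext q
    induction q using Quot.ind with
    | _ x => exact congrArg (Quot.mk _) (by rcases x with ⟨b, p, a⟩; simp)

/-- The Day extension, as a functor on copresheaf categories. -/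
def DayExtGen (θ : B ⥤ C) : (B ⥤ Type) ⥤ (C ⥤ Type) where
  obj P := DayCopresheaf θ P
  map {P Q} η :=
    { app := fun c => TypeCat.ofHom (Quot.map (fun x => (⟨x.pt, η.app x.pt x.elt, x.arr⟩ : DayPt θ Q c))
        (by
          rintro x y ⟨f, h1, h2⟩
          exact ⟨f, by dsimp; rw [← h1, FunctorToTypes.naturality], h2⟩))
      naturality := by
        intro c c' g
        ext q
        induction q using Quot.ind with
        | _ x => rfl }
  map_id P := by
    ext c q
    change DayObj θ P c at q
    induction q using Quot.ind with
    | _ x => rfl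
  map_comp {P Q R} η η' := by
    ext c q
    change DayObj θ P c at q
    induction q using Quot.ind with
    | _ x => rfl

variable {ι : Type}

/-- The external product of a family of copresheaves. -/
def extProd (F : ι → (C ⥤ Type)) : (ι → C) ⥤ Type where
  obj x := ∀ i, (F i).obj (x i)
  map f := TypeCat.ofHom fun p => fun i => (F i).map (f i) (p i)
  map_id x := by ext p i; simp
  map_comp f g := by ext p i; simp

/-- The external product, as a functor. -/
def extProdFunctor (ι : Type) (C : Type) [SmallCategory C] :
    (ι → (C ⥤ Type)) ⥤ ((ι → C) ⥤ Type) where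
  obj := extProd
  map {F G} α :=
    { app := fun x => TypeCat.ofHom fun p => fun i => (α i).app (x i) (p i)
      naturality := by
        intro x y f
        ext p
        funext i
        exact NatTrans.naturality_apply (α i) (f i) (p i) }
  map_id F := by ext x p; rfl
  map_comp α β := by ext x p; rfl

/-- Reindexing of pi-categories along a map of index types. -/
def reindexPi {A : Type u} [Category.{v} A] {ι' ι : Type} (h : ι' → ι) :
    (ι → A) ⥤ (ι' → A) where
  obj x := fun i' => x (h i')
  map f := fun i' => f (h i')
  map_id _x := rfl
  map_comp _f _g := rfl

/-- The tuple `(θ₁, …, θₙ)` of a family of multi-ary operations. -/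
def tupleFunctor {κ : ι → Type} (θs : ∀ i, (κ i → C) ⥤ C) :
    ((Σ i, κ i) → C) ⥤ (ι → C) where
  obj x := fun i => (θs i).obj (fun s => x ⟨i, s⟩)
  map f := fun i => (θs i).map (fun s => f ⟨i, s⟩)
  map_id x := by funext i; exact (θs i).map_id _
  map_comp f g := by funext i; exact (θs i).map_comp _ _

/-- Multi-composition of multi-ary operations on `C`. -/
def mc {κ : ι → Type} (θ : (ι → C) ⥤ C) (θs : ∀ i, (κ i → C) ⥤ C) :
    ((Σ i, κ i) → C) ⥤ C :=
  tupleFunctor θs ⋙ θ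

/-- The Day extension of a (total) `ι`-ary operation. -/
def DayExtFunctor (θ : (ι → C) ⥤ C) : (ι → (C ⥤ Type)) ⥤ (C ⥤ Type) :=
  extProdFunctor ι C ⋙ DayExtGen θ

end DayPaper

open DayPaper CategoryTheory

namespace DayPaper

section

variable {B C : Type} [SmallCategory B] [SmallCategory C]

/-- Precomposition of the representative `(b, p, a)` with `α.app b`; this respects the coend
relation because `α` is natural. -/
def dayExtGenMap {θ χ : B ⥤ C} (α : θ ⟶ χ) : DayExtGen χ ⟶ DayExtGen θ where
  app P :=
    { app := fun c => TypeCat.ofHom (Quot.map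
        (fun x => (⟨x.pt, x.elt, α.app x.pt ≫ x.arr⟩ : DayPt θ P c))
        (by
          rintro x y ⟨f, hElt, hArr⟩
          exact ⟨f, hElt, by dsimp; rw [hArr, ← Category.assoc, ← α.naturality, Category.assoc]⟩))
      naturality := by
        intro c c' g
        ext q
        change DayObj χ P c at q
        induction q using Quot.ind with
        | _ x => exact congrArg (Quot.mk _) (by dsimp; rw [Category.assoc]) }
  naturality := by
    intro P Q η
    ext c q
    change DayObj χ P c at q
    induction q using Quot.ind with
    | _ x => rfl

theorem dayExtGenMap_id (θ : B ⥤ C) : dayExtGenMap (𝟙 θ) = 𝟙 (DayExtGen θ) := by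
  ext P c q
  change DayObj θ P c at q
  induction q using Quot.ind with
  | _ x => exact congrArg (Quot.mk _) (by dsimp [dayExtGenMap]; rw [Category.id_comp])

theorem dayExtGenMap_comp {θ χ ψ : B ⥤ C} (α : θ ⟶ χ) (β : χ ⟶ ψ) :
    dayExtGenMap (α ≫ β) = dayExtGenMap β ≫ dayExtGenMap α := by
  ext P c q
  change DayObj ψ P c at q
  induction q using Quot.ind with
  | _ x => exact congrArg (Quot.mk _) (by dsimp [dayExtGenMap]; rw [Category.assoc])

end

def dayExtGenFunctor (B C : Type) [SmallCategory B] [SmallCategory C] :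
    (B ⥤ C) ⥤ ((B ⥤ Type) ⥤ (C ⥤ Type))ᵒᵖ where
  obj θ := op (DayExtGen θ)
  map α := (dayExtGenMap α).op
  map_id θ := by rw [dayExtGenMap_id]; rfl
  map_comp α β := by rw [dayExtGenMap_comp]; rfl

def dayExtFunctorOp (ι C : Type) [SmallCategory C] :
    ((ι → C) ⥤ C) ⥤ ((ι → (C ⥤ Type)) ⥤ (C ⥤ Type))ᵒᵖ :=
  dayExtGenFunctor (ι → C) C ⋙ ((Functor.whiskeringLeft _ _ _).obj (extProdFunctor ι C)).op

theorem dayExtFunctorOp_obj (ι C : Type) [SmallCategory C] (θ : (ι → C) ⥤ C) :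
    (dayExtFunctorOp ι C).obj θ = op (DayExtFunctor θ) :=
  rfl

end DayPaper

theorem dayExtension_functorial (C : Type) [SmallCategory C] (n : ℕ) :
    ∃ Φ : ((Fin n → C) ⥤ C) ⥤ ((Fin n → (C ⥤ Type)) ⥤ (C ⥤ Type))ᵒᵖ,
      ∀ θ : (Fin n → C) ⥤ C, Φ.obj θ = Opposite.op (DayExtFunctor θ) :=
  ⟨dayExtFunctorOp (Fin n) C, dayExtFunctorOp_obj (Fin n) C⟩
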